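/- Let |α₀⟩, |α₁⟩ be unit vectors in a bipartite Hilbert space A⊗B. Define |α_θ⟩ = cos(θ/2)|α₀⟩ + e^{iφ}sin(θ/2)|α₁⟩ and |α_ω⟩ = cos(ω/2)|α₀⟩ + e^{iφ'}sin(ω/2)|α₁⟩. Then the reduced density operators on B satisfy D_tr(α_θ^B, α_ω^B) ≤ |z₁|·F(α₀^A, α₁^A) + |z₂|·D_tr(α₀^B, α₁^B), where z₁ = (sin θ · e^{−iφ} − sin ω · e^{−iφ'})/2 and z₂ = (cos θ − cos ω)/2. -/

import Mathlib

open Matrix Kronecker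
open scoped ComplexOrder
noncomputable section

open scoped Classical in
/-- total matrix square root: the PSD square root when `M` is PSD, else `0`. -/
def matSqrt {n : Type*} [Fintype n] [DecidableEq n] (M : Matrix n n ℂ) : Matrix n n ℂ :=
  if h : M.PosSemidef then h.1.eigenvectorUnitary.1 * diagonal ((↑) ∘ (√·) ∘ h.1.eigenvalues) *
    (star h.1.eigenvectorUnitary : Matrix n n ℂ) else 0

/-- trace (Schatten-1) norm `Tr √(MᴴM)`. -/
def traceNorm {n : Type*} [Fintype n] [DecidableEq n] (M : Matrix n n ℂ) : ℝ :=
  (matSqrt (Mᴴ * M)).trace.re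

/-- trace distance. -/
def traceDist {n : Type*} [Fintype n] [DecidableEq n] (ρ σ : Matrix n n ℂ) : ℝ :=
  traceNorm (ρ - σ) / 2

/-- fidelity `‖√ρ√σ‖₁`. -/
def fidelity {n : Type*} [Fintype n] [DecidableEq n] (ρ σ : Matrix n n ℂ) : ℝ :=
  traceNorm (matSqrt ρ * matSqrt σ)

/-- partial trace over the first tensor factor. -/
def trFst {a b : Type*} [Fintype a] (M : Matrix (a × b) (a × b) ℂ) : Matrix b b ℂ :=
  Matrix.of fun i j => ∑ k, M (k, i) (k, j)

/-- partial trace over the second tensor factor. -/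
def trSnd {a b : Type*} [Fintype b] (M : Matrix (a × b) (a × b) ℂ) : Matrix a a ℂ :=
  Matrix.of fun i j => ∑ k, M (i, k) (j, k)

/-- rank-one projector `|v⟩⟨v|`. -/
def outerP {n : Type*} (v : n → ℂ) : Matrix n n ℂ :=
  Matrix.of fun i j => v i * star (v j)

/-- tensor product of vectors. -/
def vkron {a b : Type*} (v : a → ℂ) (w : b → ℂ) : a × b → ℂ :=
  fun p => v p.1 * w p.2


/-- the superposition `cos(θ/2)|α₀⟩ + e^{iφ} sin(θ/2)|α₁⟩`. -/
def supvec {A B : Type*} (a0 a1 : A × B → ℂ) (th ph : ℝ) : A × B → ℂ :=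
  ((Real.cos (th/2) : ℂ)) • a0 + (Complex.exp (Complex.I * ph) * (Real.sin (th/2) : ℂ)) • a1

open scoped Matrix.Norms.L2Operator

section Analysis
set_option linter.unusedSectionVars false


variable {n m : Type*} [Fintype n] [DecidableEq n] [Fintype m] [DecidableEq m]

lemma vdv_mul (V : Matrix n n ℂ) (hV : Vᴴ * V = 1) (a b : n → ℂ) :
    (V * diagonal a * Vᴴ) * (V * diagonal b * Vᴴ) = V * diagonal (a * b) * Vᴴ := by
  have : diagonal a * (Vᴴ * V) * diagonal b = diagonal (a * b) := by
    rw [hV, mul_one, diagonal_mul_diagonal]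
    rfl
  calc (V * diagonal a * Vᴴ) * (V * diagonal b * Vᴴ)
      = V * (diagonal a * (Vᴴ * V) * diagonal b) * Vᴴ := by noncomm_ring
    _ = V * diagonal (a * b) * Vᴴ := by rw [this]

lemma vdv_trace (V : Matrix n n ℂ) (hV : Vᴴ * V = 1) (a : n → ℂ) :
    (V * diagonal a * Vᴴ).trace = ∑ i, a i := by
  rw [Matrix.trace_mul_cycle, hV, one_mul, Matrix.trace_diagonal]

lemma vdv_conjTranspose (V : Matrix n n ℂ) (d : n → ℝ) :
    (V * diagonal (fun i => (d i : ℂ)) * Vᴴ)ᴴ = V * diagonal (fun i => (d i : ℂ)) * Vᴴ := by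
  simp only [conjTranspose_mul, conjTranspose_conjTranspose, diagonal_conjTranspose]
  rw [mul_assoc]
  congr 2
  ext i j
  simp only [diagonal, Matrix.of_apply, Pi.star_apply]
  split <;> simp [Complex.conj_ofReal]

lemma matSqrt_eq' {P : Matrix n n ℂ} (hP : P.PosSemidef) :
    matSqrt P = (hP.1.eigenvectorUnitary : Matrix n n ℂ)
      * diagonal (fun i => ((√(hP.1.eigenvalues i) : ℝ) : ℂ))
      * (hP.1.eigenvectorUnitary : Matrix n n ℂ)ᴴ := by
  rw [matSqrt, dif_pos hP]; rfl

lemma matSqrt_mul_self {P : Matrix n n ℂ} (hP : P.PosSemidef) : matSqrt P * matSqrt P = P := by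
  rw [matSqrt_eq' hP, vdv_mul _ (Matrix.mem_unitaryGroup_iff'.mp hP.1.eigenvectorUnitary.2)]
  have hd : ((fun i => ((√(hP.1.eigenvalues i) : ℝ) : ℂ)) * fun i => ((√(hP.1.eigenvalues i) : ℝ) : ℂ))
      = RCLike.ofReal ∘ hP.1.eigenvalues := by
    funext i
    simp only [Pi.mul_apply, Function.comp_apply]
    rw [← Complex.ofReal_mul, Real.mul_self_sqrt (hP.eigenvalues_nonneg i)]
    rfl
  rw [hd]
  exact hP.1.spectral_theorem.symm

/-- master decomposition of `matSqrt (Mᴴ * M)` -/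
lemma master (M : Matrix m n ℂ) :
    ∃ (V : Matrix n n ℂ) (d : n → ℝ),
      Vᴴ * V = 1 ∧ V * Vᴴ = 1 ∧ (∀ i, 0 ≤ d i) ∧
      matSqrt (Mᴴ * M) = V * diagonal (fun i => (d i : ℂ)) * Vᴴ := by
  have hP : (Mᴴ * M).PosSemidef := Matrix.posSemidef_conjTranspose_mul_self M
  refine ⟨hP.1.eigenvectorUnitary, Real.sqrt ∘ hP.1.eigenvalues,
    Matrix.mem_unitaryGroup_iff'.mp hP.1.eigenvectorUnitary.2,
    Matrix.mem_unitaryGroup_iff.mp hP.1.eigenvectorUnitary.2,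
    fun i => Real.sqrt_nonneg _, ?_⟩
  rw [matSqrt, dif_pos hP]
  rfl

lemma norm_one_le_mat : ‖(1 : Matrix n n ℂ)‖ ≤ 1 := by
  rw [Matrix.l2_opNorm_def]
  apply ContinuousLinearMap.opNorm_le_bound _ zero_le_one
  intro x
  simp [Matrix.toEuclideanLin_apply]

lemma unitary_norm_le {V : Matrix n n ℂ} (hV : Vᴴ * V = 1) : ‖V‖ ≤ 1 := by
  have h := Matrix.l2_opNorm_conjTranspose_mul_self V
  rw [hV] at h
  nlinarith [norm_nonneg V, norm_one_le_mat (n := n)]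

lemma coe_fun_mul (f g : n → ℝ) :
    ((fun i => (f i : ℂ)) * fun i => (g i : ℂ)) = fun i => ((f i * g i : ℝ) : ℂ) := by
  funext i
  push_cast [Pi.mul_apply]
  ring

lemma vdvR_mul (V : Matrix n n ℂ) (hV : Vᴴ * V = 1) (f g : n → ℝ) :
    (V * diagonal (fun i => (f i : ℂ)) * Vᴴ) * (V * diagonal (fun i => (g i : ℂ)) * Vᴴ)
      = V * diagonal (fun i => ((f i * g i : ℝ) : ℂ)) * Vᴴ := by
  rw [vdv_mul V hV, coe_fun_mul]

lemma diagonal_coe_congr {f g : n → ℝ} (h : ∀ i, f i = g i) :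
    diagonal (fun i => (f i : ℂ)) = diagonal (fun i => (g i : ℂ)) := by
  have : (fun i => (f i : ℂ)) = fun i => (g i : ℂ) := by
    funext i; rw [h i]
  rw [this]

lemma proj_norm_le {V : Matrix n n ℂ} (hV : Vᴴ * V = 1) (q : n → ℝ)
    (hq : ∀ i, q i * q i = q i) :
    ‖V * diagonal (fun i => (q i : ℂ)) * Vᴴ‖ ≤ 1 := by
  set Pr : Matrix n n ℂ := V * diagonal (fun i => (q i : ℂ)) * Vᴴ with hPr
  have hmul : Pr * Pr = Pr := by
    rw [hPr, vdvR_mul V hV]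
    rw [show (V * diagonal (fun i => ((q i * q i : ℝ) : ℂ)) * Vᴴ : Matrix n n ℂ)
        = V * diagonal (fun i => (q i : ℂ)) * Vᴴ by
      rw [diagonal_coe_congr hq]]
  have hct : Prᴴ = Pr := vdv_conjTranspose V q
  have h := Matrix.l2_opNorm_conjTranspose_mul_self Pr
  rw [hct, hmul] at h
  nlinarith [norm_nonneg Pr]

/-- polar decomposition -/
lemma polar (M : Matrix m n ℂ) :
    ∃ W : Matrix m n ℂ, ‖W‖ ≤ 1 ∧ M = W * matSqrt (Mᴴ * M) ∧
      Wᴴ * M = matSqrt (Mᴴ * M) := by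
  obtain ⟨V, d, hV1, hV2, hd, hS⟩ := master M
  have hP : (Mᴴ * M).PosSemidef := Matrix.posSemidef_conjTranspose_mul_self M
  set S := matSqrt (Mᴴ * M) with hSdef
  have hMM : Mᴴ * M = V * diagonal (fun i => ((d i * d i : ℝ) : ℂ)) * Vᴴ := by
    rw [← vdvR_mul V hV1, ← hS, matSqrt_mul_self hP]
  set rinv : n → ℝ := fun i => (d i)⁻¹ with hrinv
  set q : n → ℝ := fun i => (d i)⁻¹ * d i with hqdef
  have hq : ∀ i, q i * q i = q i := by
    intro i
    rcases eq_or_ne (d i) 0 with h | h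
    · simp [hqdef, h]
    · simp [hqdef, inv_mul_cancel₀ h]
  set Sp : Matrix n n ℂ := V * diagonal (fun i => (rinv i : ℂ)) * Vᴴ with hSp
  set Pr : Matrix n n ℂ := V * diagonal (fun i => (q i : ℂ)) * Vᴴ with hPrdef
  have hSpS : Sp * S = Pr := by
    rw [hSp, hS, vdvR_mul V hV1, hPrdef]
  have hPrH : Prᴴ = Pr := vdv_conjTranspose V q
  have h1 : Pr * (Mᴴ * M) = Mᴴ * M := by
    rw [hMM, hPrdef, vdvR_mul V hV1]
    congr 2
    apply diagonal_coe_congr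
    intro i
    rcases eq_or_ne (d i) 0 with h | h
    · simp [hqdef, h]
    · simp [hqdef, inv_mul_cancel₀ h]
  have h2 : (Mᴴ * M) * Pr = Mᴴ * M := by
    have := congrArg conjTranspose h1
    simpa only [conjTranspose_mul, conjTranspose_conjTranspose, hPrH, hP.1.eq] using this
  have hMPr : M * Pr = M := by
    have e1 : Prᴴ * Mᴴ * (M * Pr) = Mᴴ * M := by
      rw [Matrix.mul_assoc, ← Matrix.mul_assoc Mᴴ M Pr, h2, hPrH, h1]
    have e2 : Prᴴ * Mᴴ * M = Mᴴ * M := by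
      rw [Matrix.mul_assoc, hPrH, h1]
    have e3 : Mᴴ * (M * Pr) = Mᴴ * M := by
      rw [← Matrix.mul_assoc, h2]
    have hKey : (M * Pr - M)ᴴ * (M * Pr - M) = 0 := by
      rw [conjTranspose_sub, Matrix.sub_mul, Matrix.mul_sub, Matrix.mul_sub,
        conjTranspose_mul, e1, e2, e3]
      simp
    exact sub_eq_zero.mp (Matrix.conjTranspose_mul_self_eq_zero.mp hKey)
  have hWnorm : ‖M * Sp‖ ≤ 1 := by
    have hWW : (M * Sp)ᴴ * (M * Sp) = Pr := by
      have hSpH : Spᴴ = Sp := vdv_conjTranspose V rinv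
      calc (M * Sp)ᴴ * (M * Sp) = Sp * (Mᴴ * M) * Sp := by
            rw [conjTranspose_mul, hSpH, Matrix.mul_assoc, ← Matrix.mul_assoc Mᴴ M Sp,
              Matrix.mul_assoc Sp]
        _ = Pr := by
            rw [hMM, hSp, vdvR_mul V hV1, vdvR_mul V hV1, hPrdef]
            congr 2
            apply diagonal_coe_congr
            intro i
            rcases eq_or_ne (d i) 0 with h | h
            · simp [hqdef, hrinv, h]
            · simp only [hqdef, hrinv]; field_simp
    have h := Matrix.l2_opNorm_conjTranspose_mul_self (M * Sp)
    rw [hWW] at h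
    have hPrle : ‖Pr‖ ≤ 1 := proj_norm_le hV1 q hq
    nlinarith [norm_nonneg (M * Sp), norm_nonneg Pr]
  refine ⟨M * Sp, hWnorm, ?_, ?_⟩
  · rw [Matrix.mul_assoc, hSpS, hMPr]
  · have hSpH : Spᴴ = Sp := vdv_conjTranspose V rinv
    calc (M * Sp)ᴴ * M = Sp * (Mᴴ * M) := by
          rw [conjTranspose_mul, hSpH, Matrix.mul_assoc]
      _ = S := by
          rw [hMM, hSp, vdvR_mul V hV1, hS]
          congr 2
          apply diagonal_coe_congr
          intro i
          rcases eq_or_ne (d i) 0 with h | h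
          · simp [hrinv, h]
          · simp only [hrinv]; field_simp

lemma diag_abs_le_norm (B : Matrix n n ℂ) (i : n) : ‖(B i i)‖ ≤ ‖B‖ := by
  have he : ‖(EuclideanSpace.single i (1:ℂ) : EuclideanSpace ℂ n)‖ = 1 := by
    simp [EuclideanSpace.norm_single]
  have h := Matrix.l2_opNorm_mulVec B (EuclideanSpace.single i (1:ℂ))
  rw [he, mul_one] at h
  refine le_trans ?_ h
  have hBe : B *ᵥ (EuclideanSpace.single i (1:ℂ) : EuclideanSpace ℂ n) = fun k => B k i := by
    ext k
    simp [Matrix.mulVec, EuclideanSpace.single, dotProduct, Pi.single_apply]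
  rw [hBe]
  have hnorm : ‖((EuclideanSpace.equiv n ℂ).symm (fun k => B k i) : EuclideanSpace ℂ n)‖
      = Real.sqrt (∑ k, ‖B k i‖^2) := by
    rw [EuclideanSpace.norm_eq]
    rfl
  rw [hnorm]
  rw [show ‖(B i i)‖ = Real.sqrt (‖B i i‖^2) by
    rw [Real.sqrt_sq_eq_abs]; simp]
  apply Real.sqrt_le_sqrt
  exact Finset.single_le_sum (f := fun k => ‖B k i‖^2) (fun k _ => sq_nonneg _) (Finset.mem_univ i)

lemma traceNorm_sum {M : Matrix n n ℂ} {V : Matrix n n ℂ} {d : n → ℝ} (hV1 : Vᴴ * V = 1)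
    (hS : matSqrt (Mᴴ * M) = V * diagonal (fun i => (d i : ℂ)) * Vᴴ) :
    traceNorm M = ∑ i, d i := by
  rw [traceNorm, hS, vdv_trace V hV1]
  rw [show (∑ i, ((d i : ℂ))) = ((∑ i, d i : ℝ) : ℂ) by push_cast; ring]
  simp

lemma traceNorm_nonneg (M : Matrix n n ℂ) : 0 ≤ traceNorm M := by
  obtain ⟨V, d, hV1, hV2, hd, hS⟩ := master M
  rw [traceNorm_sum hV1 hS]
  exact Finset.sum_nonneg fun i _ => hd i

lemma exists_dual (M : Matrix n n ℂ) :
    ∃ C : Matrix n n ℂ, ‖C‖ ≤ 1 ∧ (C * M).trace = (traceNorm M : ℂ) := by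
  obtain ⟨V, d, hV1, hV2, hd, hS⟩ := master M
  obtain ⟨W, hW, hMW, hWM⟩ := polar M
  refine ⟨Wᴴ, ?_, ?_⟩
  · rw [Matrix.l2_opNorm_conjTranspose]; exact hW
  · rw [hWM, hS, vdv_trace V hV1, traceNorm_sum hV1 hS]
    push_cast
    ring

lemma dual_bound (C M : Matrix n n ℂ) :
    ‖((C * M).trace)‖ ≤ ‖C‖ * traceNorm M := by
  obtain ⟨V, d, hV1, hV2, hd, hS⟩ := master M
  obtain ⟨W, hW, hMW, _⟩ := polar M
  have htn : traceNorm M = ∑ i, d i := traceNorm_sum hV1 hS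
  set B := Vᴴ * (C * W) * V with hB
  have hBnorm : ‖B‖ ≤ ‖C‖ := by
    have h1 : ‖V‖ ≤ 1 := unitary_norm_le hV1
    have h2 : ‖Vᴴ‖ ≤ 1 := by rw [Matrix.l2_opNorm_conjTranspose]; exact h1
    calc ‖B‖ ≤ ‖Vᴴ * (C * W)‖ * ‖V‖ := Matrix.l2_opNorm_mul _ _
      _ ≤ (‖Vᴴ‖ * ‖C * W‖) * ‖V‖ := by
          apply mul_le_mul_of_nonneg_right (Matrix.l2_opNorm_mul _ _) (norm_nonneg _)
      _ ≤ (1 * (‖C‖ * ‖W‖)) * 1 := by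
          apply mul_le_mul ?_ h1 (norm_nonneg _) (by positivity)
          exact mul_le_mul h2 (Matrix.l2_opNorm_mul _ _) (norm_nonneg _) zero_le_one
      _ ≤ ‖C‖ * 1 := by
          rw [one_mul, mul_one]
          exact mul_le_mul_of_nonneg_left hW (norm_nonneg _)
      _ = ‖C‖ := mul_one _
  have htr : (C * M).trace = ∑ i, B i i * (d i : ℂ) := by
    calc (C * M).trace = ((C * W) * (V * diagonal (fun i => (d i : ℂ)) * Vᴴ)).trace := by
          rw [hMW, hS]
          simp only [Matrix.mul_assoc]
      _ = (B * diagonal (fun i => (d i : ℂ))).trace := by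
          rw [hB]
          rw [show (C * W) * (V * diagonal (fun i => (d i : ℂ)) * Vᴴ)
              = ((C * W) * V * diagonal (fun i => (d i : ℂ))) * Vᴴ by
            simp only [Matrix.mul_assoc]]
          rw [Matrix.trace_mul_cycle]
          simp only [Matrix.mul_assoc]
      _ = ∑ i, B i i * (d i : ℂ) := by
          rw [Matrix.trace]
          congr 1
          funext i
          simp [Matrix.mul_diagonal]
  rw [htr, htn]
  calc ‖(∑ i, B i i * (d i : ℂ))‖
      ≤ ∑ i, ‖(B i i * (d i : ℂ))‖ := norm_sum_le _ _
    _ ≤ ∑ i, ‖C‖ * d i := by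
        apply Finset.sum_le_sum
        intro i _
        rw [norm_mul]
        have h1 : ‖((d i : ℂ))‖ = d i := by
          rw [Complex.norm_real, Real.norm_eq_abs, abs_of_nonneg (hd i)]
        rw [h1]
        exact mul_le_mul_of_nonneg_right ((diag_abs_le_norm B i).trans hBnorm) (hd i)
    _ = ‖C‖ * ∑ i, d i := by rw [Finset.mul_sum]

lemma traceNorm_triangle (X Y : Matrix n n ℂ) :
    traceNorm (X + Y) ≤ traceNorm X + traceNorm Y := by
  obtain ⟨C, hC, hCt⟩ := exists_dual (X + Y)
  have h0 : traceNorm (X + Y) = ((C * (X + Y)).trace).re := by rw [hCt]; simp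
  rw [h0, Matrix.mul_add, Matrix.trace_add, Complex.add_re]
  have bX : ((C * X).trace).re ≤ traceNorm X := by
    calc ((C * X).trace).re ≤ ‖((C * X).trace)‖ := Complex.re_le_norm _
      _ ≤ ‖C‖ * traceNorm X := dual_bound C X
      _ ≤ 1 * traceNorm X := mul_le_mul_of_nonneg_right hC (traceNorm_nonneg X)
      _ = traceNorm X := one_mul _
  have bY : ((C * Y).trace).re ≤ traceNorm Y := by
    calc ((C * Y).trace).re ≤ ‖((C * Y).trace)‖ := Complex.re_le_norm _
      _ ≤ ‖C‖ * traceNorm Y := dual_bound C Y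
      _ ≤ 1 * traceNorm Y := mul_le_mul_of_nonneg_right hC (traceNorm_nonneg Y)
      _ = traceNorm Y := one_mul _
  exact add_le_add bX bY

lemma traceNorm_smul_le (z : ℂ) (X : Matrix n n ℂ) :
    traceNorm (z • X) ≤ ‖z‖ * traceNorm X := by
  obtain ⟨C, hC, hCt⟩ := exists_dual (z • X)
  have h0 : traceNorm (z • X) = ((C * (z • X)).trace).re := by rw [hCt]; simp
  rw [h0, Matrix.mul_smul, Matrix.trace_smul]
  calc ((z • (C * X).trace) : ℂ).re ≤ ‖(z • (C * X).trace)‖ := Complex.re_le_norm _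
    _ = ‖z‖ * ‖((C * X).trace)‖ := by rw [smul_eq_mul, norm_mul]
    _ ≤ ‖z‖ * (‖C‖ * traceNorm X) := by
        apply mul_le_mul_of_nonneg_left (dual_bound C X) (norm_nonneg _)
    _ ≤ ‖z‖ * (1 * traceNorm X) := by
        apply mul_le_mul_of_nonneg_left ?_ (norm_nonneg _)
        exact mul_le_mul_of_nonneg_right hC (traceNorm_nonneg X)
    _ = ‖z‖ * traceNorm X := by rw [one_mul]

lemma traceNorm_conjTranspose_le (X : Matrix n n ℂ) : traceNorm (Xᴴ) ≤ traceNorm X := by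
  obtain ⟨C, hC, hCt⟩ := exists_dual (Xᴴ)
  have h0 : traceNorm (Xᴴ) = ((C * Xᴴ).trace).re := by rw [hCt]; simp
  rw [h0]
  have hconj : (C * Xᴴ).trace = starRingEnd ℂ ((Cᴴ * X).trace) := by
    have h := Matrix.trace_conjTranspose (Cᴴ * X)
    rw [Matrix.conjTranspose_mul, Matrix.conjTranspose_conjTranspose,
      Matrix.trace_mul_comm] at h
    rw [h, Complex.star_def]
  rw [hconj]
  calc (starRingEnd ℂ ((Cᴴ * X).trace)).re ≤ ‖(starRingEnd ℂ ((Cᴴ * X).trace))‖ :=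
        Complex.re_le_norm _
    _ = ‖((Cᴴ * X).trace)‖ := Complex.norm_conj _
    _ ≤ ‖Cᴴ‖ * traceNorm X := dual_bound Cᴴ X
    _ ≤ 1 * traceNorm X := by
        rw [Matrix.l2_opNorm_conjTranspose]
        exact mul_le_mul_of_nonneg_right hC (traceNorm_nonneg X)
    _ = traceNorm X := one_mul _

variable {q : Type*} [Fintype q] [DecidableEq q]

lemma traceNorm_sandwich (C : Matrix q n ℂ) (X : Matrix n n ℂ) (D : Matrix n q ℂ) :
    traceNorm (C * X * D) ≤ ‖C‖ * ‖D‖ * traceNorm X := by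
  obtain ⟨E, hE, hEt⟩ := exists_dual (C * X * D)
  have h0 : traceNorm (C * X * D) = ((E * (C * X * D)).trace).re := by rw [hEt]; simp
  have hcyc : (E * (C * X * D)).trace = ((D * E * C) * X).trace := by
    rw [show E * (C * X * D) = (E * C * X) * D by simp only [Matrix.mul_assoc]]
    rw [Matrix.trace_mul_comm]
    simp only [Matrix.mul_assoc]
  rw [h0, hcyc]
  have hn : ‖D * E * C‖ ≤ ‖D‖ * ‖C‖ := by
    calc ‖D * E * C‖ ≤ ‖D * E‖ * ‖C‖ := Matrix.l2_opNorm_mul _ _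
      _ ≤ (‖D‖ * ‖E‖) * ‖C‖ :=
          mul_le_mul_of_nonneg_right (Matrix.l2_opNorm_mul _ _) (norm_nonneg _)
      _ ≤ (‖D‖ * 1) * ‖C‖ := by
          apply mul_le_mul_of_nonneg_right ?_ (norm_nonneg _)
          exact mul_le_mul_of_nonneg_left hE (norm_nonneg _)
      _ = ‖D‖ * ‖C‖ := by rw [mul_one]
  calc (((D * E * C) * X).trace).re ≤ ‖(((D * E * C) * X).trace)‖ := Complex.re_le_norm _
    _ ≤ ‖D * E * C‖ * traceNorm X := dual_bound _ X
    _ ≤ (‖D‖ * ‖C‖) * traceNorm X := mul_le_mul_of_nonneg_right hn (traceNorm_nonneg X)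
    _ = ‖C‖ * ‖D‖ * traceNorm X := by ring

lemma matSqrt_conjTranspose {P : Matrix n n ℂ} (hP : P.PosSemidef) :
    (matSqrt P)ᴴ = matSqrt P := by
  rw [matSqrt_eq' hP]
  exact vdv_conjTranspose _ _

lemma crossnorm (M0 M1 : Matrix q n ℂ) :
    traceNorm (M0 * M1ᴴ) ≤ traceNorm (matSqrt (M0ᴴ * M0) * matSqrt (M1ᴴ * M1)) := by
  obtain ⟨W0, hW0, hM0, _⟩ := polar M0
  obtain ⟨W1, hW1, hM1, _⟩ := polar M1
  have key : M0 * M1ᴴ = W0 * (matSqrt (M0ᴴ * M0) * matSqrt (M1ᴴ * M1)) * W1ᴴ := by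
    conv_lhs => rw [hM0, hM1]
    rw [Matrix.conjTranspose_mul,
      matSqrt_conjTranspose (Matrix.posSemidef_conjTranspose_mul_self M1)]
    simp only [Matrix.mul_assoc]
  rw [key]
  calc traceNorm (W0 * (matSqrt (M0ᴴ * M0) * matSqrt (M1ᴴ * M1)) * W1ᴴ)
      ≤ ‖W0‖ * ‖W1ᴴ‖ * traceNorm (matSqrt (M0ᴴ * M0) * matSqrt (M1ᴴ * M1)) :=
        traceNorm_sandwich _ _ _
    _ ≤ 1 * 1 * traceNorm (matSqrt (M0ᴴ * M0) * matSqrt (M1ᴴ * M1)) := by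
        apply mul_le_mul_of_nonneg_right ?_ (traceNorm_nonneg _)
        rw [Matrix.l2_opNorm_conjTranspose]
        exact mul_le_mul hW0 hW1 (norm_nonneg _) zero_le_one
    _ = traceNorm (matSqrt (M0ᴴ * M0) * matSqrt (M1ᴴ * M1)) := by rw [one_mul, one_mul]

end Analysis

section Quantum
set_option linter.unusedSectionVars false

variable {A B : Type*} [Fintype A] [DecidableEq A] [Fintype B] [DecidableEq B]

/-- cross outer product `|a⟩⟨b|`. -/
def crossP {n : Type*} (a b : n → ℂ) : Matrix n n ℂ :=
  Matrix.of fun i j => a i * star (b j)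

lemma trFst_add (M N : Matrix (A × B) (A × B) ℂ) : trFst (M + N) = trFst M + trFst N := by
  ext i j
  simp [trFst, Finset.sum_add_distrib]

lemma trFst_sub (M N : Matrix (A × B) (A × B) ℂ) : trFst (M - N) = trFst M - trFst N := by
  ext i j
  simp [trFst, Finset.sum_sub_distrib]

lemma trFst_smul (z : ℂ) (M : Matrix (A × B) (A × B) ℂ) : trFst (z • M) = z • trFst M := by
  ext i j
  simp [trFst, Finset.mul_sum]

/-- the conjugated coefficient matrix of a bipartite vector -/
def cmat (a : A × B → ℂ) : Matrix B A ℂ :=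
  Matrix.of fun i k => star (a (k, i))

lemma trSnd_outerP_eq (a : A × B → ℂ) : trSnd (outerP a) = (cmat a)ᴴ * (cmat a) := by
  ext k l
  simp only [trSnd, outerP, Matrix.of_apply, Matrix.mul_apply, Matrix.conjTranspose_apply, cmat]
  apply Finset.sum_congr rfl
  intro i _
  simp [mul_comm]

lemma trFst_crossP_eq (a b : A × B → ℂ) :
    (trFst (crossP a b)).map (starRingEnd ℂ) = (cmat a) * (cmat b)ᴴ := by
  ext i j
  simp only [trFst, crossP, Matrix.map_apply, Matrix.of_apply, Matrix.mul_apply,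
    Matrix.conjTranspose_apply, cmat, map_sum]
  apply Finset.sum_congr rfl
  intro k _
  simp [Complex.star_def, _root_.map_mul, mul_comm]

lemma trFst_crossP_conjTranspose (a b : A × B → ℂ) :
    (trFst (crossP b a)) = (trFst (crossP a b))ᴴ := by
  ext i j
  simp only [trFst, crossP, Matrix.conjTranspose_apply, Matrix.of_apply, map_sum, star_sum]
  apply Finset.sum_congr rfl
  intro k _
  simp [mul_comm]

lemma matSqrt_posSemidef {n : Type*} [Fintype n] [DecidableEq n] {P : Matrix n n ℂ}
    (hP : P.PosSemidef) : (matSqrt P).PosSemidef := by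
  rw [matSqrt_eq' hP]
  apply PosSemidef.mul_mul_conjTranspose_same
  rw [posSemidef_diagonal_iff]
  intro i
  exact Complex.zero_le_real.mpr (Real.sqrt_nonneg _)

lemma traceNorm_map_star {n : Type*} [Fintype n] [DecidableEq n] (M : Matrix n n ℂ) :
    traceNorm (M.map (starRingEnd ℂ)) = traceNorm M := by
  have hP : (Mᴴ * M).PosSemidef := Matrix.posSemidef_conjTranspose_mul_self M
  have hmapH : (M.map (starRingEnd ℂ))ᴴ = Mᴴ.map (starRingEnd ℂ) := by
    ext i j
    simp [Matrix.conjTranspose_apply, Matrix.map_apply]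
  have hprod : (M.map (starRingEnd ℂ))ᴴ * (M.map (starRingEnd ℂ))
      = (Mᴴ * M).map (starRingEnd ℂ) := by
    rw [hmapH, ← _root_.Matrix.map_mul]
  have hPmap : (Mᴴ * M).map (starRingEnd ℂ) = (Mᴴ * M)ᵀ := by
    ext i j
    simp only [Matrix.map_apply, Matrix.transpose_apply]
    conv_rhs => rw [← hP.1]
    simp [Matrix.conjTranspose_apply]
  have hPT : ((Mᴴ * M)ᵀ).PosSemidef := hP.transpose
  have htr : ∀ {P : Matrix n n ℂ} (h : P.PosSemidef), (matSqrt P).trace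
      = (Multiset.map (fun z : ℂ => ((√z.re : ℝ) : ℂ)) P.charpoly.roots).sum := by
    intro P h
    rw [h.1.roots_charpoly_eq_eigenvalues, Multiset.map_map, matSqrt_eq' h,
      vdv_trace _ (Matrix.mem_unitaryGroup_iff'.mp h.1.eigenvectorUnitary.2),
      Finset.sum_eq_multiset_sum]
    rfl
  rw [traceNorm, traceNorm, hprod, hPmap, htr hPT, htr hP, Matrix.charpoly_transpose]

lemma sqrt_square_eq {n : Type*} [Fintype n] [DecidableEq n] {P : Matrix n n ℂ}
    (hP : P.PosSemidef) : matSqrt ((matSqrt P)ᴴ * matSqrt P) = matSqrt P := by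
  have h1 : (matSqrt P)ᴴ = matSqrt P := matSqrt_conjTranspose hP
  have h2 : (matSqrt P)ᴴ * matSqrt P = P := by rw [h1, matSqrt_mul_self hP]
  rw [h2]

lemma traceNorm_cross_le_fidelity (a0 a1 : A × B → ℂ) :
    traceNorm (trFst (crossP a0 a1)) ≤ fidelity (trSnd (outerP a0)) (trSnd (outerP a1)) := by
  have h1 : traceNorm (trFst (crossP a0 a1)) = traceNorm ((cmat a0) * (cmat a1)ᴴ) := by
    rw [← trFst_crossP_eq, traceNorm_map_star]
  rw [h1, fidelity, trSnd_outerP_eq, trSnd_outerP_eq]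
  exact crossnorm (cmat a0) (cmat a1)

lemma outerP_supvec_expand (a0 a1 : A × B → ℂ) (t p : ℝ) :
    outerP (supvec a0 a1 t p)
      = ((Real.cos (t/2) : ℂ) * (Real.cos (t/2) : ℂ)) • outerP a0
        + ((Real.sin (t/2) : ℂ) * (Real.sin (t/2) : ℂ)
            * (Complex.exp (Complex.I * p) * star (Complex.exp (Complex.I * p)))) • outerP a1
        + ((Real.cos (t/2) : ℂ) * (Real.sin (t/2) : ℂ)
            * star (Complex.exp (Complex.I * p))) • crossP a0 a1
        + ((Real.cos (t/2) : ℂ) * (Real.sin (t/2) : ℂ)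
            * Complex.exp (Complex.I * p)) • crossP a1 a0 := by
  ext pq rs
  simp only [outerP, supvec, crossP, Matrix.add_apply, Matrix.smul_apply, Matrix.of_apply,
    Pi.add_apply, Pi.smul_apply, smul_eq_mul, star_add, star_mul', Complex.star_def,
    _root_.map_add, _root_.map_mul, Complex.conj_ofReal]
  ring

end Quantum

theorem stmt6 {A B : Type*} [Fintype A] [DecidableEq A] [Fintype B] [DecidableEq B]
    (a0 a1 : A × B → ℂ) (h0 : star a0 ⬝ᵥ a0 = 1) (h1 : star a1 ⬝ᵥ a1 = 1)
    (th om ph ph' : ℝ) :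
    traceDist (trFst (outerP (supvec a0 a1 th ph))) (trFst (outerP (supvec a0 a1 om ph')))
      ≤ ‖(((Real.sin th : ℂ) * Complex.exp (-(Complex.I * ph))
            - (Real.sin om : ℂ) * Complex.exp (-(Complex.I * ph'))) / 2)‖
          * fidelity (trSnd (outerP a0)) (trSnd (outerP a1))
        + |(Real.cos th - Real.cos om) / 2|
          * traceDist (trFst (outerP a0)) (trFst (outerP a1)) := by
  classical
  set Xc := trFst (crossP a0 a1) with hXcdef
  set P0 := trFst (outerP a0) with hP0def
  set P1 := trFst (outerP a1) with hP1def
  set z1 : ℂ := ((Real.sin th : ℂ) * Complex.exp (-(Complex.I * ph))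
      - (Real.sin om : ℂ) * Complex.exp (-(Complex.I * ph'))) / 2 with hz1def
  set z2 : ℝ := (Real.cos th - Real.cos om) / 2 with hz2def
  have hstar : ∀ r : ℝ, star (Complex.exp (Complex.I * r)) = Complex.exp (-(Complex.I * r)) := by
    intro r
    rw [Complex.star_def, ← Complex.exp_conj]
    congr 1
    simp [_root_.map_mul, Complex.conj_I, Complex.conj_ofReal]
  have hee : ∀ r : ℝ, Complex.exp (Complex.I * r) * star (Complex.exp (Complex.I * r)) = 1 := by
    intro r
    rw [hstar, ← Complex.exp_add]
    simp
  have hsin : ∀ t : ℝ, (Real.sin t : ℂ) = 2 * (Real.sin (t/2) : ℂ) * (Real.cos (t/2) : ℂ) := by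
    intro t
    have h : Real.sin t = 2 * Real.sin (t/2) * Real.cos (t/2) := by
      rw [← Real.sin_two_mul]
      congr 1
      ring
    rw [h]; push_cast; ring
  have hcos : ∀ t : ℝ, (Real.cos (t/2) : ℂ) * (Real.cos (t/2) : ℂ)
      = (((1 + Real.cos t)/2 : ℝ) : ℂ) := by
    intro t
    have h2 : (2:ℝ) * (t/2) = t := by ring
    have h3 : Real.cos (t/2) ^ 2 = 1/2 + Real.cos t / 2 := by rw [Real.cos_sq, h2]
    have hr : Real.cos (t/2) * Real.cos (t/2) = (1 + Real.cos t)/2 := by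
      calc Real.cos (t/2) * Real.cos (t/2) = Real.cos (t/2)^2 := (sq _).symm
        _ = (1 + Real.cos t)/2 := by rw [h3]; ring
    rw [← hr]; push_cast; ring
  have hpy : ∀ t : ℝ, (Real.sin (t/2) : ℂ) * (Real.sin (t/2) : ℂ)
      = 1 - (Real.cos (t/2) : ℂ) * (Real.cos (t/2) : ℂ) := by
    intro t
    have hr : Real.sin (t/2) * Real.sin (t/2) = 1 - Real.cos (t/2) * Real.cos (t/2) := by
      have := Real.sin_sq_add_cos_sq (t/2)
      nlinarith [this]
    rw [show (1 : ℂ) - (Real.cos (t/2) : ℂ) * (Real.cos (t/2) : ℂ)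
        = ((1 - Real.cos (t/2) * Real.cos (t/2) : ℝ) : ℂ) by push_cast; ring, ← hr]
    push_cast; ring
  have ez1 : z1 = (Real.cos (th/2) : ℂ) * (Real.sin (th/2) : ℂ)
        * star (Complex.exp (Complex.I * ph))
      - (Real.cos (om/2) : ℂ) * (Real.sin (om/2) : ℂ)
        * star (Complex.exp (Complex.I * ph')) := by
    rw [hz1def, hstar ph, hstar ph', hsin th, hsin om]
    try ring
  have ez1' : star z1 = (Real.cos (th/2) : ℂ) * (Real.sin (th/2) : ℂ)
        * Complex.exp (Complex.I * ph)
      - (Real.cos (om/2) : ℂ) * (Real.sin (om/2) : ℂ)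
        * Complex.exp (Complex.I * ph') := by
    rw [ez1]
    simp only [star_sub, star_mul', Complex.star_def, _root_.map_mul, Complex.conj_ofReal,
      Complex.conj_conj]
    try ring
  have ez2 : (z2 : ℂ) = (Real.cos (th/2) : ℂ) * (Real.cos (th/2) : ℂ)
      - (Real.cos (om/2) : ℂ) * (Real.cos (om/2) : ℂ) := by
    rw [hcos th, hcos om, hz2def]
    push_cast; ring
  have hΔ : trFst (outerP (supvec a0 a1 th ph)) - trFst (outerP (supvec a0 a1 om ph'))
      = z1 • Xc + (star z1) • Xcᴴ + (z2 : ℂ) • (P0 - P1) := by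
    rw [outerP_supvec_expand a0 a1 th ph, outerP_supvec_expand a0 a1 om ph']
    rw [trFst_add, trFst_add, trFst_add, trFst_add, trFst_add, trFst_add,
      trFst_smul, trFst_smul, trFst_smul, trFst_smul, trFst_smul, trFst_smul,
      trFst_smul, trFst_smul]
    rw [trFst_crossP_conjTranspose a0 a1, hee ph, hee ph']
    rw [hpy th, hpy om]
    rw [ez1', ez1, ez2, ← hXcdef, ← hP0def, ← hP1def]
    module
  have hXF : traceNorm Xc ≤ fidelity (trSnd (outerP a0)) (trSnd (outerP a1)) :=
    traceNorm_cross_le_fidelity a0 a1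
  have habs : (0:ℝ) ≤ ‖z1‖ := norm_nonneg _
  have b1 : traceNorm (z1 • Xc) ≤ ‖z1‖ * fidelity (trSnd (outerP a0)) (trSnd (outerP a1)) :=
    (traceNorm_smul_le z1 Xc).trans (mul_le_mul_of_nonneg_left hXF habs)
  have b2 : traceNorm ((star z1) • Xcᴴ)
      ≤ ‖z1‖ * fidelity (trSnd (outerP a0)) (trSnd (outerP a1)) := by
    calc traceNorm ((star z1) • Xcᴴ) ≤ ‖(star z1)‖ * traceNorm Xcᴴ :=
          traceNorm_smul_le _ _
      _ = ‖z1‖ * traceNorm Xcᴴ := by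
          rw [Complex.star_def, Complex.norm_conj]
      _ ≤ ‖z1‖ * traceNorm Xc :=
          mul_le_mul_of_nonneg_left (traceNorm_conjTranspose_le Xc) habs
      _ ≤ ‖z1‖ * fidelity (trSnd (outerP a0)) (trSnd (outerP a1)) :=
          mul_le_mul_of_nonneg_left hXF habs
  have b3 : traceNorm ((z2 : ℂ) • (P0 - P1)) ≤ |z2| * traceNorm (P0 - P1) := by
    calc traceNorm ((z2 : ℂ) • (P0 - P1)) ≤ ‖((z2:ℂ))‖ * traceNorm (P0 - P1) :=
          traceNorm_smul_le _ _
      _ = |z2| * traceNorm (P0 - P1) := by rw [Complex.norm_real, Real.norm_eq_abs]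
  have tri : traceNorm (z1 • Xc + (star z1) • Xcᴴ + (z2 : ℂ) • (P0 - P1))
      ≤ traceNorm (z1 • Xc) + traceNorm ((star z1) • Xcᴴ)
        + traceNorm ((z2 : ℂ) • (P0 - P1)) := by
    calc traceNorm (z1 • Xc + (star z1) • Xcᴴ + (z2 : ℂ) • (P0 - P1))
        ≤ traceNorm (z1 • Xc + (star z1) • Xcᴴ) + traceNorm ((z2 : ℂ) • (P0 - P1)) :=
          traceNorm_triangle _ _
      _ ≤ traceNorm (z1 • Xc) + traceNorm ((star z1) • Xcᴴ)
            + traceNorm ((z2 : ℂ) • (P0 - P1)) :=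
          add_le_add (traceNorm_triangle _ _) le_rfl
  have hL : traceDist (trFst (outerP (supvec a0 a1 th ph)))
        (trFst (outerP (supvec a0 a1 om ph')))
      = traceNorm (z1 • Xc + (star z1) • Xcᴴ + (z2 : ℂ) • (P0 - P1)) / 2 := by
    rw [traceDist, hΔ]
  have hR : traceDist P0 P1 = traceNorm (P0 - P1) / 2 := by rw [traceDist]
  rw [hL, hR]
  linarith [tri, b1, b2, b3]
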